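/- arXiv:math/0501131 — 2 statements merged into one kernel-verified Lean document; each statement's English description precedes it below -/
import Mathlib

section
/- Let ψ ∈ Ω∞, let κ ∈ 𝒦 have dominated growth with respect to ψ (κ ∈ D(ψ)), and let x ∈ M₊(ψ). Then the following statements are equivalent: (i) φ_κ(x) is Cesàro convergent, i.e. lim_{t→∞} (1/t)∫₀^t φ_κ(x)(s) ds exists; (ii) f_{L,κ}(x) is independent of the Banach limit L ∈ BL(ℝ₊); (iii) lim_{t→∞} φ(x)(t) exists and f_{L,κ}(x) = lim_{t→∞} φ(x)(t) for every L ∈ BL(ℝ₊). In particular, for κ ∈ D(ψ) a positive element x of M(ψ) is κ-measurable if and only if it is Tauberian, i.e. if and only if lim_{t→∞} (1/ψ(t))∫₀^t x*(s) ds exists. -/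
open MeasureTheory Filter Set

noncomputable section

/-- `f` is bounded and continuous on `[0,∞)`, i.e. (the restriction of) `f`
belongs to `C_b([0,∞))`. -/
def IsCb (f : ℝ → ℝ) : Prop :=
  ContinuousOn f (Ici 0) ∧ ∃ M : ℝ, ∀ t ∈ Ici (0:ℝ), |f t| ≤ M

/-- Bounded real sequences, i.e. elements of `ℓ∞(ℕ)`. -/
def IsBddSeq (a : ℕ → ℝ) : Prop := ∃ M : ℝ, ∀ n, |a n| ≤ M

/-- A Banach limit on `C_b([0,∞))`: a positive linear translation-invariant
functional with `L(1) = 1`.  (The underlying map is defined on all of `ℝ → ℝ`;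
the axioms only refer to its values on bounded continuous functions on `[0,∞)`.) -/
structure BanachLimitR where
  toFun : (ℝ → ℝ) → ℝ
  map_add : ∀ f g : ℝ → ℝ, IsCb f → IsCb g →
    toFun (fun t => f t + g t) = toFun f + toFun g
  map_smul : ∀ (c : ℝ) (f : ℝ → ℝ), IsCb f → toFun (fun t => c * f t) = c * toFun f
  pos : ∀ f : ℝ → ℝ, IsCb f → (∀ t ∈ Ici (0:ℝ), 0 ≤ f t) → 0 ≤ toFun f
  map_one : toFun (fun _ => 1) = 1
  shift_inv : ∀ f : ℝ → ℝ, IsCb f → ∀ s : ℝ, 0 ≤ s → toFun (fun t => f (t + s)) = toFun f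

/-- A Banach limit on `ℓ∞(ℕ)`: a positive linear shift-invariant functional
with `L'(1) = 1`. -/
structure BanachLimitN where
  toFun : (ℕ → ℝ) → ℝ
  map_add : ∀ a b : ℕ → ℝ, IsBddSeq a → IsBddSeq b →
    toFun (fun n => a n + b n) = toFun a + toFun b
  map_smul : ∀ (c : ℝ) (a : ℕ → ℝ), IsBddSeq a → toFun (fun n => c * a n) = c * toFun a
  pos : ∀ a : ℕ → ℝ, IsBddSeq a → (∀ n, 0 ≤ a n) → 0 ≤ toFun a
  map_one : toFun (fun _ => 1) = 1
  shift_inv : ∀ a : ℕ → ℝ, IsBddSeq a → toFun (fun n => a (n + 1)) = toFun a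

/-- An element of `SC_b^*([0,∞))`: a positive linear functional on `C_b([0,∞))`
with `γ(1) = 1` vanishing on `C₀([0,∞))`. -/
structure SCbStar where
  toFun : (ℝ → ℝ) → ℝ
  map_add : ∀ f g : ℝ → ℝ, IsCb f → IsCb g →
    toFun (fun t => f t + g t) = toFun f + toFun g
  map_smul : ∀ (c : ℝ) (f : ℝ → ℝ), IsCb f → toFun (fun t => c * f t) = c * toFun f
  pos : ∀ f : ℝ → ℝ, IsCb f → (∀ t ∈ Ici (0:ℝ), 0 ≤ f t) → 0 ≤ toFun f
  map_one : toFun (fun _ => 1) = 1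
  vanish : ∀ f : ℝ → ℝ, IsCb f → Tendsto f atTop (nhds 0) → toFun f = 0

/-- A positive linear functional on `C_b([0,∞))`. -/
structure PosLinFunc where
  toFun : (ℝ → ℝ) → ℝ
  map_add : ∀ f g : ℝ → ℝ, IsCb f → IsCb g →
    toFun (fun t => f t + g t) = toFun f + toFun g
  map_smul : ∀ (c : ℝ) (f : ℝ → ℝ), IsCb f → toFun (fun t => c * f t) = c * toFun f
  pos : ∀ f : ℝ → ℝ, IsCb f → (∀ t ∈ Ici (0:ℝ), 0 ≤ f t) → 0 ≤ toFun f

/-- `ψ ∈ Ω_∞`: concave on `[0,∞)`, nonnegative, `ψ(t) → 0` as `t → 0⁺` and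
`ψ(t) → ∞` as `t → ∞`. -/
def OmegaInf (ψ : ℝ → ℝ) : Prop :=
  ConcaveOn ℝ (Ici 0) ψ ∧ (∀ t ∈ Ici (0:ℝ), 0 ≤ ψ t) ∧
    Tendsto ψ (nhdsWithin 0 (Ioi 0)) (nhds 0) ∧ Tendsto ψ atTop atTop

/-- The decreasing rearrangement `x*` of a measurable function `x` on `[0,∞)`. -/
def decRearr (x : ℝ → ℝ) (t : ℝ) : ℝ :=
  sInf {s : ℝ | 0 ≤ s ∧ volume {u : ℝ | 0 ≤ u ∧ s < |x u|} ≤ ENNReal.ofReal t}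

/-- The weighted mean function `φ(x)(t) = (1/ψ(t)) ∫₀ᵗ x*(s) ds`. -/
def phiW (ψ x : ℝ → ℝ) (t : ℝ) : ℝ := (∫ s in (0:ℝ)..t, decRearr x s) / ψ t

/-- Membership in the Marcinkiewicz space `M(ψ)`. -/
def MemM (ψ x : ℝ → ℝ) : Prop :=
  Measurable x ∧ ∃ M : ℝ, ∀ t > (0:ℝ), phiW ψ x t ≤ M

/-- Membership in the positive cone `M₊(ψ)`. -/
def MemMplus (ψ x : ℝ → ℝ) : Prop := MemM ψ x ∧ ∀ t ∈ Ici (0:ℝ), 0 ≤ x t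

/-- The Marcinkiewicz norm `‖x‖_{M(ψ)} = sup_{t>0} φ(x)(t)`. -/
def MNorm (ψ x : ℝ → ℝ) : ℝ := ⨆ t > (0:ℝ), phiW ψ x t

/-- `κ ∈ 𝒦`: strictly increasing, invertible (as a map of `[0,∞)` onto itself),
differentiable, unbounded, with `κ(0) = 0`. -/
def MemK (κ : ℝ → ℝ) : Prop :=
  StrictMonoOn κ (Ici 0) ∧ κ 0 = 0 ∧ MapsTo κ (Ici 0) (Ici 0) ∧
    SurjOn κ (Ici 0) (Ici 0) ∧ DifferentiableOn ℝ κ (Ici 0) ∧ Tendsto κ atTop atTop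

/-- `f_{L,κ}(x) = L(φ_κ(x))` for a Banach limit `L` on `C_b([0,∞))`; the function
`φ_κ(x)`, bounded and continuous on `(0,∞)`, is fed to `L` as `t ↦ φ_κ(x)(max t 1)`. -/
def fL (L : BanachLimitR) (ψ κ x : ℝ → ℝ) : ℝ :=
  L.toFun fun t => phiW ψ x (κ (max t 1))

/-- `f_{L',κ}(x) = L'({φ(x)(κ(n))}ₙ)` for a Banach limit `L'` on `ℓ∞(ℕ)`. -/
def fLN (L' : BanachLimitN) (ψ κ x : ℝ → ℝ) : ℝ :=
  L'.toFun fun n => phiW ψ x (κ n)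

/-- `κ` has restricted growth with respect to `ψ` (`κ ∈ R(ψ)`): the sequence
`ψ(κ(n))/ψ(κ(n+1))` is almost convergent to `1`. -/
def RestrictedGrowth (ψ κ : ℝ → ℝ) : Prop :=
  ∀ L' : BanachLimitN, L'.toFun (fun n => ψ (κ n) / ψ (κ ((n:ℝ) + 1))) = 1

/-- `κ` has dominated growth with respect to `ψ` (`κ ∈ D(ψ)`):
`(ψ∘κ)'(t)/(ψ∘κ)(t) < C/t` for some `C > 0` and all `t > 0`. -/
def DominatedGrowth (ψ κ : ℝ → ℝ) : Prop :=
  (∀ t > (0:ℝ), DifferentiableAt ℝ (fun u => ψ (κ u)) t) ∧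
    ∃ C > (0:ℝ), ∀ t > (0:ℝ), deriv (fun u => ψ (κ u)) t / ψ (κ t) < C / t

/-- `κ` is of exponential increase: `κ(t + C) > 2κ(t)` for some `C > 0` and all `t > 0`. -/
def ExpIncrease (κ : ℝ → ℝ) : Prop := ∃ C > (0:ℝ), ∀ t > (0:ℝ), 2 * κ t < κ (t + C)

/-- The piecewise linear extension map `p : ℓ∞(ℕ) → C_b([0,∞))`. -/
def plExt (a : ℕ → ℝ) (t : ℝ) : ℝ :=
  a ⌊t⌋₊ + (a (⌊t⌋₊ + 1) - a ⌊t⌋₊) * (t - (⌊t⌋₊ : ℝ))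

/-- The Cesàro mean `C(g)(μ) = (1/μ) ∫₀^μ g(s) ds` (with `C(g)(0) := g(0)`). -/
def cesaro (g : ℝ → ℝ) (μ : ℝ) : ℝ :=
  if μ = 0 then g 0 else (∫ s in (0:ℝ)..μ, g s) / μ

/-- `M_k(g)(λ) = (1/k(λ)) ∫₀^λ g(s) k'(s) ds` (with `M_k(g)(0) := g(0)`). -/
def MkFun (k g : ℝ → ℝ) (l : ℝ) : ℝ :=
  if l = 0 then g 0 else (∫ s in (0:ℝ)..l, g s * deriv k s) / k l

/-- The Connes-Dixmier functional `τ_{γ,k}(x) = γ(M_k(φ(x)))`; the function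
`M_k(φ(x))`, bounded and continuous on `(0,∞)`, is fed to `γ` as `t ↦ M_k(φ(x))(max t 1)`. -/
def tauCD (γ : SCbStar) (ψ k x : ℝ → ℝ) : ℝ :=
  γ.toFun fun t => MkFun k (phiW ψ x) (max t 1)

/-- A set `Λ` of Banach limits has the Cesàro limit property if for each
`g ∈ C_b([0,∞))` both `liminf C(g)` and `limsup C(g)` are attained as values `L(g)`, `L ∈ Λ`. -/
def CesaroLimitProp (Λ : Set BanachLimitR) : Prop :=
  ∀ g : ℝ → ℝ, IsCb g →
    (∃ L ∈ Λ, L.toFun g = liminf (cesaro g) atTop) ∧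
    (∃ L ∈ Λ, L.toFun g = limsup (cesaro g) atTop)

/-- Dilation invariance of an element of `SC_b^*([0,∞))`. -/
def DilationInvariant (ω : SCbStar) : Prop :=
  ∀ g : ℝ → ℝ, IsCb g → ∀ a : ℝ, 0 < a → ω.toFun (fun t => g (a * t)) = ω.toFun g

/-! Write `g(t) = φ(x)(κ(t))`. Since `t ↦ ∫₀ᵗ x*` is nondecreasing, dominated growth yields
Hardy's one-sided Tauberian condition `g(t) - g(u) ≤ K (u - t) / t` for `0 < t ≤ u`; hence
Cesàro convergence of `g` forces convergence of `g`, and so of `φ(x)`, as `κ` is an increasing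
bijection of `[0,∞)`. A limit of `φ(x)` is the value of every Banach limit on `φ_κ(x)`.
Conversely, Hahn–Banach applied to the sublinear functional `f ↦ limsup` of the Cesàro means
of `f` gives Banach limits attaining both the lower and the upper Cesàro limit of `φ_κ(x)`,
so if all Banach limits agree there, its Cesàro means converge. -/

open Topology

lemma isCb_const (c : ℝ) : IsCb fun _ => c :=
  ⟨continuousOn_const, |c|, fun _ _ => le_rfl⟩

namespace IsCb

variable {f g : ℝ → ℝ}

lemma add (hf : IsCb f) (hg : IsCb g) : IsCb fun t => f t + g t := by
  obtain ⟨Mf, hMf⟩ := hf.2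
  obtain ⟨Mg, hMg⟩ := hg.2
  exact ⟨hf.1.add hg.1, Mf + Mg, fun t ht => (abs_add_le _ _).trans (add_le_add (hMf t ht) (hMg t ht))⟩

lemma const_mul (hf : IsCb f) (c : ℝ) : IsCb fun t => c * f t := by
  obtain ⟨M, hM⟩ := hf.2
  refine ⟨continuousOn_const.mul hf.1, |c| * M, fun t ht => ?_⟩
  rw [abs_mul]
  exact mul_le_mul_of_nonneg_left (hM t ht) (abs_nonneg c)

lemma comp_add_const (hf : IsCb f) {s : ℝ} (hs : 0 ≤ s) : IsCb fun t => f (t + s) := by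
  obtain ⟨M, hM⟩ := hf.2
  have hmaps : MapsTo (· + s) (Ici (0 : ℝ)) (Ici 0) := fun t (ht : 0 ≤ t) => by
    simp only [mem_Ici]; linarith
  exact ⟨hf.1.comp (continuous_add_const s).continuousOn hmaps, M, fun t ht => hM _ (hmaps ht)⟩

lemma intervalIntegrable (hf : IsCb f) {μ : ℝ} (hμ : 0 ≤ μ) :
    IntervalIntegrable f volume 0 μ :=
  (hf.1.mono fun t ht => by rw [uIcc_of_le hμ] at ht; exact ht.1).intervalIntegrable

lemma abs_cesaro_le (hf : IsCb f) : ∃ M, ∀ μ > 0, |cesaro f μ| ≤ M := by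
  obtain ⟨M, hM⟩ := hf.2
  refine ⟨M, fun μ hμ => ?_⟩
  rw [cesaro, if_neg hμ.ne', abs_div, abs_of_pos hμ, div_le_iff₀ hμ]
  simpa [abs_of_pos hμ] using intervalIntegral.norm_integral_le_of_norm_le_const (f := f)
    (a := 0) (b := μ) fun t ht => (Real.norm_eq_abs _).trans_le <|
      hM t (by rw [uIoc_of_le hμ.le] at ht; exact ht.1.le)

lemma isBoundedUnder_le_cesaro (hf : IsCb f) : IsBoundedUnder (· ≤ ·) atTop (cesaro f) := by
  obtain ⟨M, hM⟩ := hf.abs_cesaro_le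
  exact ⟨M, eventually_map.2 <| (eventually_gt_atTop 0).mono fun μ hμ => (abs_le.1 (hM μ hμ)).2⟩

lemma isBoundedUnder_ge_cesaro (hf : IsCb f) : IsBoundedUnder (· ≥ ·) atTop (cesaro f) := by
  obtain ⟨M, hM⟩ := hf.abs_cesaro_le
  exact ⟨-M, eventually_map.2 <| (eventually_gt_atTop 0).mono fun μ hμ => (abs_le.1 (hM μ hμ)).1⟩

end IsCb

lemma cesaro_const (c : ℝ) : cesaro (fun _ => c) = fun _ => c := by
  funext μ
  by_cases hμ : μ = 0 <;> simp [cesaro, hμ]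

lemma cesaro_const_mul (c : ℝ) (f : ℝ → ℝ) :
    cesaro (fun t => c * f t) = fun μ => c * cesaro f μ := by
  funext μ
  by_cases hμ : μ = 0
  · simp [cesaro, hμ]
  · simp only [cesaro, if_neg hμ, intervalIntegral.integral_const_mul, mul_div_assoc]

lemma cesaro_add {f g : ℝ → ℝ} (hf : IsCb f) (hg : IsCb g) {μ : ℝ} (hμ : 0 ≤ μ) :
    cesaro (fun t => f t + g t) μ = cesaro f μ + cesaro g μ := by
  by_cases h : μ = 0
  · simp [cesaro, h]
  · simp only [cesaro, if_neg h, intervalIntegral.integral_add (hf.intervalIntegrable hμ)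
      (hg.intervalIntegrable hμ), add_div]

lemma cesaro_neg (f : ℝ → ℝ) : cesaro (-f) = -cesaro f := by
  funext μ
  by_cases hμ : μ = 0
  · simp [cesaro, hμ]
  · simp [cesaro, hμ, intervalIntegral.integral_neg, neg_div]

lemma limsup_cesaro_const_mul_of_nonneg {f : ℝ → ℝ} (hf : IsCb f) {c : ℝ} (hc : 0 ≤ c) :
    limsup (cesaro fun t => c * f t) atTop = c * limsup (cesaro f) atTop := by
  rw [cesaro_const_mul]
  exact ((monotone_mul_left_of_nonneg hc).map_limsup_of_continuousAt (cesaro f)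
    (continuous_const_mul c).continuousAt hf.isBoundedUnder_le_cesaro
    hf.isBoundedUnder_ge_cesaro.isCoboundedUnder_le).symm

lemma limsup_cesaro_const_mul_of_nonpos {f : ℝ → ℝ} (hf : IsCb f) {c : ℝ} (hc : c ≤ 0) :
    limsup (cesaro fun t => c * f t) atTop = c * liminf (cesaro f) atTop := by
  rw [cesaro_const_mul]
  exact ((antitone_mul_left hc).map_liminf_of_continuousAt (cesaro f)
    (continuous_const_mul c).continuousAt hf.isBoundedUnder_le_cesaro.isCoboundedUnder_ge
    hf.isBoundedUnder_ge_cesaro).symm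

lemma limsup_cesaro_add_le {f g : ℝ → ℝ} (hf : IsCb f) (hg : IsCb g) :
    limsup (cesaro fun t => f t + g t) atTop ≤
      limsup (cesaro f) atTop + limsup (cesaro g) atTop := by
  rw [limsup_congr ((eventually_ge_atTop 0).mono fun μ hμ => cesaro_add hf hg hμ)]
  exact limsup_add_le hf.isBoundedUnder_ge_cesaro hf.isBoundedUnder_le_cesaro
    hg.isBoundedUnder_ge_cesaro.isCoboundedUnder_le hg.isBoundedUnder_le_cesaro

lemma tendsto_cesaro_comp_add_sub {f : ℝ → ℝ} (hf : IsCb f) {s : ℝ} (hs : 0 ≤ s) :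
    Tendsto (cesaro fun t => f (t + s) - f t) atTop (𝓝 0) := by
  obtain ⟨M, hM⟩ := hf.2
  have hbound : ∀ a, 0 ≤ a → |∫ t in a..a + s, f t| ≤ M * s := fun a ha => by
    simpa [abs_of_nonneg hs] using intervalIntegral.norm_integral_le_of_norm_le_const (f := f)
      (a := a) (b := a + s) fun t ht => (Real.norm_eq_abs _).trans_le <|
        hM t (by rw [uIoc_of_le (by linarith)] at ht; exact (ha.trans_lt ht.1).le)
  refine squeeze_zero_norm' ?_ ((tendsto_const_nhds (x := 2 * (M * s))).div_atTop tendsto_id)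
  filter_upwards [eventually_gt_atTop 0] with μ hμ
  have hshift : ∫ t in (0:ℝ)..μ, f (t + s) = ∫ t in s..μ + s, f t := by
    simp [intervalIntegral.integral_comp_add_right]
  have hsplit : ∫ t in (0:ℝ)..μ, (f (t + s) - f t) =
      (∫ t in μ..μ + s, f t) - ∫ t in (0:ℝ)..0 + s, f t := by
    rw [intervalIntegral.integral_sub ((hf.comp_add_const hs).intervalIntegrable hμ.le)
      (hf.intervalIntegrable hμ.le), hshift, zero_add,
      intervalIntegral.integral_interval_sub_interval_comm'
        ((hf.intervalIntegrable hs).symm.trans (hf.intervalIntegrable (by linarith)))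
        (hf.intervalIntegrable hμ.le) (hf.intervalIntegrable hs).symm]
  rw [Real.norm_eq_abs, cesaro, if_neg hμ.ne', hsplit, abs_div, abs_of_pos hμ]
  refine div_le_div_of_nonneg_right ?_ hμ.le
  calc _ ≤ |∫ t in μ..μ + s, f t| + |∫ t in (0:ℝ)..0 + s, f t| := abs_sub _ _
    _ ≤ M * s + M * s := add_le_add (hbound μ hμ.le) (hbound 0 le_rfl)
    _ = 2 * (M * s) := by ring

def cbSubmodule : Submodule ℝ (ℝ → ℝ) where
  carrier := {f | IsCb f}
  add_mem' := IsCb.add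
  zero_mem' := isCb_const 0
  smul_mem' c _ hf := hf.const_mul c

section HahnBanach

variable (Λ : cbSubmodule →ₗ[ℝ] ℝ) (hΛ : ∀ f : cbSubmodule, Λ f ≤ limsup (cesaro f) atTop)
include hΛ

lemma eq_of_tendsto_cesaro_of_le_limsup {f : cbSubmodule} {a : ℝ}
    (hf : Tendsto (cesaro f) atTop (𝓝 a)) : Λ f = a := by
  have hf' : Tendsto (-cesaro f) atTop (𝓝 (-a)) := hf.neg
  have hle := hΛ f
  have hneg := hΛ (-f)
  rw [hf.limsup_eq] at hle
  rw [map_neg, Submodule.coe_neg, cesaro_neg, hf'.limsup_eq] at hneg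
  linarith

lemma nonneg_of_le_limsup_cesaro {f : cbSubmodule} (hf : ∀ t ∈ Ici (0 : ℝ), 0 ≤ f.1 t) :
    0 ≤ Λ f := by
  have hcesaro : ∀ᶠ μ in atTop, cesaro (-f.1) μ ≤ 0 := by
    filter_upwards [eventually_gt_atTop 0] with μ hμ
    rw [cesaro_neg, Pi.neg_apply, neg_nonpos, cesaro, if_neg hμ.ne']
    exact div_nonneg (intervalIntegral.integral_nonneg hμ.le fun t ht => hf t ht.1) hμ.le
  have h := (hΛ (-f)).trans
    (limsup_le_of_le (-f).2.isBoundedUnder_ge_cesaro.isCoboundedUnder_le hcesaro)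
  rw [map_neg] at h
  linarith

end HahnBanach

open Classical in
def BanachLimitR.ofLELimsupCesaro (Λ : cbSubmodule →ₗ[ℝ] ℝ)
    (hΛ : ∀ f : cbSubmodule, Λ f ≤ limsup (cesaro f) atTop) : BanachLimitR where
  toFun f := if hf : IsCb f then Λ ⟨f, hf⟩ else 0
  map_add f g hf hg := by
    rw [dif_pos (hf.add hg), dif_pos hf, dif_pos hg]
    exact _root_.map_add Λ ⟨f, hf⟩ ⟨g, hg⟩
  map_smul c f hf := by
    rw [dif_pos (hf.const_mul c), dif_pos hf]
    exact _root_.map_smul Λ c ⟨f, hf⟩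
  pos f hf hpos := by
    rw [dif_pos hf]
    exact nonneg_of_le_limsup_cesaro Λ hΛ (f := ⟨f, hf⟩) hpos
  map_one := by
    rw [dif_pos (isCb_const 1)]
    exact eq_of_tendsto_cesaro_of_le_limsup Λ hΛ (f := ⟨_, isCb_const 1⟩)
      (by rw [cesaro_const]; exact tendsto_const_nhds)
  shift_inv f hf s hs := by
    rw [dif_pos (hf.comp_add_const hs), dif_pos hf, ← sub_eq_zero, ← map_sub]
    exact eq_of_tendsto_cesaro_of_le_limsup Λ hΛ (tendsto_cesaro_comp_add_sub hf hs)

lemma BanachLimitR.ofLELimsupCesaro_apply {Λ : cbSubmodule →ₗ[ℝ] ℝ}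
    {hΛ : ∀ f : cbSubmodule, Λ f ≤ limsup (cesaro f) atTop} {f : ℝ → ℝ} (hf : IsCb f) :
    (ofLELimsupCesaro Λ hΛ).toFun f = Λ ⟨f, hf⟩ :=
  dif_pos hf

lemma exists_banachLimitR_apply_eq {g : ℝ → ℝ} (hg : IsCb g) {r : ℝ}
    (hr : r ∈ Icc (liminf (cesaro g) atTop) (limsup (cesaro g) atTop)) :
    ∃ L : BanachLimitR, L.toFun g = r := by
  let g' : cbSubmodule := ⟨g, hg⟩
  have hzero : ∀ c : ℝ, c • g' = 0 → c • r = 0 := by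
    intro c hc
    rcases eq_or_ne c 0 with rfl | hc0
    · exact zero_smul ℝ r
    · obtain rfl : g = fun _ => 0 := congrArg Subtype.val ((smul_eq_zero.1 hc).resolve_left hc0)
      simp only [cesaro_const, liminf_const, limsup_const, Icc_self, mem_singleton_iff] at hr
      simp [hr]
  let F := LinearPMap.mkSpanSingleton' (σ := RingHom.id ℝ) g' r hzero
  have hF : ∀ v : F.domain, F v ≤ limsup (cesaro v.1) atTop := by
    rintro ⟨v, hv⟩
    obtain ⟨c, rfl⟩ := Submodule.mem_span_singleton.1 hv
    rw [LinearPMap.mkSpanSingleton'_apply, smul_eq_mul]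
    change c * r ≤ limsup (cesaro fun t => c * g t) atTop
    rcases le_total 0 c with hc | hc
    · rw [limsup_cesaro_const_mul_of_nonneg hg hc]
      exact mul_le_mul_of_nonneg_left hr.2 hc
    · rw [limsup_cesaro_const_mul_of_nonpos hg hc]
      exact mul_le_mul_of_nonpos_left hr.1 hc
  obtain ⟨Λ, hΛF, hΛ⟩ := exists_extension_of_le_sublinear F (fun v => limsup (cesaro v.1) atTop)
    (fun c hc v => limsup_cesaro_const_mul_of_nonneg v.2 hc.le)
    (fun v w => limsup_cesaro_add_le v.2 w.2) hF
  refine ⟨.ofLELimsupCesaro Λ hΛ, ?_⟩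
  have hg' : g' ∈ F.domain := Submodule.mem_span_singleton_self g'
  rw [BanachLimitR.ofLELimsupCesaro_apply hg, hΛF ⟨g', hg'⟩]
  exact LinearPMap.mkSpanSingleton'_apply_self g' r hzero hg'

lemma cesaroLimitProp_univ : CesaroLimitProp univ := fun _ hg =>
  have hle := liminf_le_limsup hg.isBoundedUnder_le_cesaro hg.isBoundedUnder_ge_cesaro
  ⟨(exists_banachLimitR_apply_eq hg ⟨le_rfl, hle⟩).imp fun _ h => ⟨mem_univ _, h⟩,
    (exists_banachLimitR_apply_eq hg ⟨hle, le_rfl⟩).imp fun _ h => ⟨mem_univ _, h⟩⟩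

namespace BanachLimitR

variable (L : BanachLimitR)

lemma apply_const (c : ℝ) : L.toFun (fun _ => c) = c := by
  have h := L.map_smul c _ (isCb_const 1)
  simp only [mul_one] at h
  rw [h, L.map_one, mul_one]

lemma mono {f g : ℝ → ℝ} (hf : IsCb f) (hg : IsCb g) (h : ∀ t ∈ Ici (0 : ℝ), f t ≤ g t) :
    L.toFun f ≤ L.toFun g := by
  have hpos := L.pos _ (hg.add (hf.const_mul (-1))) fun t ht => by linarith [h t ht]
  rw [L.map_add _ _ hg (hf.const_mul (-1)), L.map_smul _ _ hf] at hpos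
  linarith

lemma apply_eq_of_tendsto {g : ℝ → ℝ} {A : ℝ} (hg : IsCb g) (hA : Tendsto g atTop (𝓝 A)) :
    L.toFun g = A := by
  refine eq_of_forall_dist_le fun ε hε => ?_
  obtain ⟨N, hN⟩ := Metric.tendsto_atTop.1 hA ε hε
  have hs : 0 ≤ max N 0 := le_max_right N 0
  have hclose : ∀ t ∈ Ici (0 : ℝ), |g (t + max N 0) - A| ≤ ε := fun t (ht : 0 ≤ t) =>
    (hN _ (by linarith [le_max_left N 0])).le
  have hshift := hg.comp_add_const hs
  have hup := L.mono hshift (isCb_const (A + ε)) fun t ht => by linarith [abs_le.1 (hclose t ht)]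
  have hlow := L.mono (isCb_const (A - ε)) hshift fun t ht => by linarith [abs_le.1 (hclose t ht)]
  rw [L.apply_const, L.shift_inv g hg _ hs] at hup hlow
  rw [Real.dist_eq, abs_le]
  constructor <;> linarith

end BanachLimitR

lemma IsCb.tendsto_cesaro_of_forall_banachLimitR_eq {g : ℝ → ℝ} (hg : IsCb g)
    (h : ∀ L₁ L₂ : BanachLimitR, L₁.toFun g = L₂.toFun g) :
    Tendsto (cesaro g) atTop (𝓝 (limsup (cesaro g) atTop)) := by
  obtain ⟨⟨L₁, -, hL₁⟩, ⟨L₂, -, hL₂⟩⟩ := cesaroLimitProp_univ g hg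
  refine tendsto_of_le_liminf_of_limsup_le ?_ le_rfl hg.isBoundedUnder_le_cesaro
    hg.isBoundedUnder_ge_cesaro
  rw [← hL₁, ← hL₂, h]

section Tauberian

variable {g : ℝ → ℝ} {K : ℝ}

lemma integral_eq_mul_cesaro_sub_mul_cesaro
    (hint : ∀ μ, 0 ≤ μ → IntervalIntegrable g volume 0 μ) {a b : ℝ} (ha : 0 < a) (hb : 0 < b) :
    ∫ u in a..b, g u = b * cesaro g b - a * cesaro g a := by
  rw [cesaro, cesaro, if_neg hb.ne', if_neg ha.ne', mul_div_cancel₀ _ hb.ne',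
    mul_div_cancel₀ _ ha.ne', intervalIntegral.integral_interval_sub_left (hint b hb.le)
      (hint a ha.le)]

lemma tendsto_average_of_tendsto_cesaro (hint : ∀ μ, 0 ≤ μ → IntervalIntegrable g volume 0 μ)
    {A δ : ℝ} (hδ : 0 < δ) (hC : Tendsto (cesaro g) atTop (𝓝 A)) :
    Tendsto (fun s => (∫ u in s..(1 + δ) * s, g u) / (δ * s)) atTop (𝓝 A) := by
  have hlim : Tendsto (fun s => ((1 + δ) * cesaro g ((1 + δ) * s) - cesaro g s) / δ) atTop
      (𝓝 (((1 + δ) * A - A) / δ)) :=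
    (((hC.comp (tendsto_id.const_mul_atTop (by linarith))).const_mul (1 + δ)).sub hC).div_const δ
  rw [show ((1 + δ) * A - A) / δ = A by field_simp; ring] at hlim
  refine hlim.congr' ((eventually_gt_atTop 0).mono fun s hs => ?_)
  dsimp only
  rw [integral_eq_mul_cesaro_sub_mul_cesaro hint hs (by positivity)]
  field_simp

lemma average_mem_Icc (hK : 0 ≤ K) (hint : ∀ μ, 0 ≤ μ → IntervalIntegrable g volume 0 μ)
    (hslow : ∀ t u, 0 < t → t ≤ u → g t - g u ≤ K * (u - t) / t) {s δ : ℝ} (hs : 0 < s)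
    (hδ : 0 < δ) :
    (∫ u in s..(1 + δ) * s, g u) / (δ * s) ∈ Icc (g s - K * δ) (g ((1 + δ) * s) + K * δ) := by
  have hδs : 0 < δ * s := by positivity
  have hle : s ≤ (1 + δ) * s := by nlinarith
  have hint' : IntervalIntegrable g volume s ((1 + δ) * s) :=
    (hint s hs.le).symm.trans (hint _ (by linarith))
  have hlower : ∀ u ∈ Icc s ((1 + δ) * s), g s - K * δ ≤ g u := fun u hu => by
    have h := hslow s u hs hu.1
    have : K * (u - s) / s ≤ K * δ := by
      rw [div_le_iff₀ hs]; nlinarith [hu.2]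
    linarith
  have hupper : ∀ u ∈ Icc s ((1 + δ) * s), g u ≤ g ((1 + δ) * s) + K * δ := fun u hu => by
    have hu0 : 0 < u := hs.trans_le hu.1
    have h := hslow u _ hu0 hu.2
    have : K * ((1 + δ) * s - u) / u ≤ K * δ := by
      rw [div_le_iff₀ hu0]
      nlinarith [mul_le_mul_of_nonneg_left hu.1 (mul_nonneg hK hδ.le)]
    linarith
  have hI₁ := intervalIntegral.integral_mono_on hle intervalIntegrable_const hint' hlower
  have hI₂ := intervalIntegral.integral_mono_on hle hint' intervalIntegrable_const hupper
  simp only [intervalIntegral.integral_const, smul_eq_mul,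
    show (1 + δ) * s - s = δ * s by ring] at hI₁ hI₂
  constructor
  · rw [le_div_iff₀ hδs]; linarith
  · rw [div_le_iff₀ hδs]; linarith

/-- The averages of `g` over `[s, (1 + δ) s]` tend to `A`, and by the Tauberian condition they
squeeze `g s` from above and `g ((1 + δ) s)` from below up to `K δ`. -/
theorem tendsto_of_tendsto_cesaro (hK : 0 ≤ K)
    (hint : ∀ μ, 0 ≤ μ → IntervalIntegrable g volume 0 μ)
    (hslow : ∀ t u, 0 < t → t ≤ u → g t - g u ≤ K * (u - t) / t) {A : ℝ}
    (hC : Tendsto (cesaro g) atTop (𝓝 A)) : Tendsto g atTop (𝓝 A) := by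
  have hsmall : ∀ ε > 0, ∃ δ > 0, K * δ < ε := fun ε hε =>
    ⟨ε / (K + 1), by positivity, by
      rw [mul_div_assoc', div_lt_iff₀ (by linarith)]; nlinarith⟩
  refine tendsto_order.2 ⟨fun a ha => ?_, fun a ha => ?_⟩
  · obtain ⟨δ, hδ, hKδ⟩ := hsmall (A - a) (by linarith)
    have hev := ((tendsto_average_of_tendsto_cesaro hint hδ hC).eventually
      (lt_mem_nhds (show a + K * δ < A by linarith))).and (eventually_gt_atTop 0)
    filter_upwards [(tendsto_id.atTop_div_const (by linarith : 0 < 1 + δ)).eventually hev]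
      with t ⟨havg, hs⟩
    rw [id] at havg hs
    have h := (average_mem_Icc hK hint hslow hs hδ).2
    rw [mul_div_cancel₀ _ (by linarith : 1 + δ ≠ 0)] at h havg
    linarith
  · obtain ⟨δ, hδ, hKδ⟩ := hsmall (a - A) (by linarith)
    filter_upwards [(tendsto_average_of_tendsto_cesaro hint hδ hC).eventually
      (gt_mem_nhds (show A < a - K * δ by linarith)), eventually_gt_atTop 0] with s havg hs
    linarith [(average_mem_Icc hK hint hslow hs hδ).1]

end Tauberian

lemma OmegaInf.pos {ψ : ℝ → ℝ} (hψ : OmegaInf ψ) {u : ℝ} (hu : 0 < u) : 0 < ψ u := by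
  obtain ⟨hconc, hnn, -, htop⟩ := hψ
  obtain ⟨T, hT1, huT⟩ := ((htop.eventually_ge_atTop 1).and (eventually_gt_atTop u)).exists
  have hT : 0 < T := hu.trans huT
  have hcoef : 0 ≤ 1 - u / T := by rw [sub_nonneg, div_le_one hT]; exact huT.le
  have h : (1 - u / T) • ψ 0 + (u / T) • ψ T ≤ ψ ((1 - u / T) • 0 + (u / T) • T) :=
    hconc.2 self_mem_Ici (mem_Ici.2 hT.le) hcoef (by positivity) (by ring)
  simp only [smul_eq_mul, mul_zero, zero_add, div_mul_cancel₀ _ hT.ne'] at h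
  have h0 : 0 ≤ (1 - u / T) * ψ 0 := mul_nonneg hcoef (hnn 0 self_mem_Ici)
  have h1 : 0 < u / T * ψ T := mul_pos (by positivity) (by linarith)
  linarith

namespace MemK

variable {κ : ℝ → ℝ} (hκ : MemK κ)
include hκ

lemma pos {t : ℝ} (ht : 0 < t) : 0 < κ t :=
  hκ.2.1 ▸ hκ.1 self_mem_Ici (le_of_lt ht) ht

lemma continuousAt {t : ℝ} (ht : 0 < t) : ContinuousAt κ t :=
  (hκ.2.2.2.2.1.differentiableAt (Ici_mem_nhds ht)).continuousAt

lemma map_atTop : map κ atTop = atTop := by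
  refine le_antisymm hκ.2.2.2.2.2 fun S hS => ?_
  obtain ⟨T, hT⟩ := mem_atTop_sets.1 hS
  refine mem_atTop_sets.2 ⟨κ (max T 0), fun y hy => ?_⟩
  have hT0 : (0 : ℝ) ≤ max T 0 := le_max_right T 0
  obtain ⟨t, ht, rfl⟩ := hκ.2.2.2.1 (mem_Ici.2 ((hκ.2.2.1 hT0).trans hy))
  exact hT t ((le_max_left T 0).trans (hκ.1.le_iff_le hT0 ht |>.1 hy))

lemma tendsto_comp_iff {f : ℝ → ℝ} {l : Filter ℝ} :
    Tendsto (fun t => f (κ t)) atTop l ↔ Tendsto f atTop l := by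
  have h := tendsto_map'_iff (f := f) (g := κ) (x := atTop) (y := l)
  rw [hκ.map_atTop] at h
  exact h.symm

end MemK

lemma one_sub_div_le_of_logDeriv_le {h : ℝ → ℝ} {C : ℝ} (hC : 0 ≤ C)
    (hpos : ∀ t > 0, 0 < h t) (hdiff : ∀ t > 0, DifferentiableAt ℝ h t)
    (hlog : ∀ t > 0, logDeriv h t ≤ C / t) {t u : ℝ} (ht : 0 < t) (htu : t ≤ u) :
    1 - h t / h u ≤ C * (u - t) / t := by
  have hu : 0 < u := ht.trans_le htu
  have hderiv : ∀ s > 0, HasDerivAt (fun s => C * Real.log s - Real.log (h s))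
      (C / s - logDeriv h s) s := fun s hs => by
    refine (((Real.hasDerivAt_log hs.ne').const_mul C).sub
      ((hdiff s hs).hasDerivAt.log (hpos s hs).ne')).congr_deriv ?_
    rw [logDeriv_apply, div_eq_mul_inv, div_eq_mul_inv]
  have hmono : MonotoneOn (fun s => C * Real.log s - Real.log (h s)) (Ioi 0) :=
    monotoneOn_of_deriv_nonneg (convex_Ioi 0)
      (fun s hs => (hderiv s hs).continuousAt.continuousWithinAt)
      (fun s hs => (hderiv s (interior_subset hs)).differentiableAt.differentiableWithinAt)
      fun s hs => by
        rw [interior_Ioi] at hs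
        rw [(hderiv s hs).deriv, sub_nonneg]
        exact hlog s hs
  have hlogs := hmono ht hu htu
  dsimp only at hlogs
  calc 1 - h t / h u = 1 - (h u / h t)⁻¹ := by rw [inv_div]
    _ ≤ Real.log (h u / h t) := Real.one_sub_inv_le_log_of_pos (div_pos (hpos u hu) (hpos t ht))
    _ = Real.log (h u) - Real.log (h t) := Real.log_div (hpos u hu).ne' (hpos t ht).ne'
    _ ≤ C * (Real.log u - Real.log t) := by linarith
    _ = C * Real.log (u / t) := by rw [Real.log_div hu.ne' ht.ne']
    _ ≤ C * (u / t - 1) := mul_le_mul_of_nonneg_left (Real.log_le_sub_one_of_pos (by positivity)) hC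
    _ = C * (u - t) / t := by field_simp

section DecreasingRearrangement

variable (x : ℝ → ℝ)

lemma decRearr_nonneg (t : ℝ) : 0 ≤ decRearr x t :=
  Real.sInf_nonneg fun _ hs => hs.1

lemma antitoneOn_decRearr {t₀ : ℝ}
    (hne : {s : ℝ | 0 ≤ s ∧ volume {u : ℝ | 0 ≤ u ∧ s < |x u|} ≤ ENNReal.ofReal t₀}.Nonempty) :
    AntitoneOn (decRearr x) (Ici t₀) := by
  have hmono : ∀ {a b : ℝ}, a ≤ b →
      {s : ℝ | 0 ≤ s ∧ volume {u : ℝ | 0 ≤ u ∧ s < |x u|} ≤ ENNReal.ofReal a} ⊆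
        {s : ℝ | 0 ≤ s ∧ volume {u : ℝ | 0 ≤ u ∧ s < |x u|} ≤ ENNReal.ofReal b} :=
    fun hab s hs => ⟨hs.1, hs.2.trans (ENNReal.ofReal_le_ofReal hab)⟩
  exact fun a ha b _ hab => csInf_le_csInf ⟨0, fun s hs => hs.1⟩ (hne.mono (hmono ha)) (hmono hab)

/-- Where `x*` is infinite, `decRearr` takes the junk value `sInf ∅ = 0`, and a non-integrable
`x*` has junk integral `0`. -/
lemma integral_decRearr_eq_zero_or_intervalIntegrable :
    (∀ t, 0 ≤ t → ∫ s in (0 : ℝ)..t, decRearr x s = 0) ∨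
      ∀ b, 0 ≤ b → IntervalIntegrable (decRearr x) volume 0 b := by
  refine or_iff_not_imp_left.2 fun h => ?_
  obtain ⟨t₀, ht₀, hΦ⟩ := not_forall₂.1 h
  have hI : IntervalIntegrable (decRearr x) volume 0 t₀ :=
    by_contra fun h => hΦ (intervalIntegral.integral_undef h)
  obtain ⟨s₁, hs₁, hne⟩ : ∃ s₁ ∈ Ioc 0 t₀,
      {s : ℝ | 0 ≤ s ∧ volume {u : ℝ | 0 ≤ u ∧ s < |x u|} ≤ ENNReal.ofReal s₁}.Nonempty := by
    by_contra! hempty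
    refine hΦ ?_
    rw [intervalIntegral.integral_of_le ht₀]
    refine setIntegral_eq_zero_of_forall_eq_zero fun s hs => ?_
    rw [decRearr, hempty s hs, Real.sInf_empty]
  intro b hb
  rcases le_total b t₀ with hbt | htb
  · exact hI.mono_set (uIcc_subset_uIcc left_mem_uIcc (mem_uIcc_of_le hb hbt))
  · refine hI.trans (((antitoneOn_decRearr x hne).mono ?_).intervalIntegrable)
    rw [uIcc_of_le htb]
    exact Icc_subset_Ici_self.trans (Ici_subset_Ici.2 hs₁.2)

lemma monotoneOn_integral_decRearr :
    MonotoneOn (fun t => ∫ s in (0 : ℝ)..t, decRearr x s) (Ici 0) := by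
  rcases integral_decRearr_eq_zero_or_intervalIntegrable x with h | h
  · intro a ha b hb _
    simp only [h a ha, h b hb, le_refl]
  · intro a ha b hb hab
    dsimp only
    rw [← intervalIntegral.integral_add_adjacent_intervals (h a ha) ((h a ha).symm.trans (h b hb))]
    exact le_add_of_nonneg_right
      (intervalIntegral.integral_nonneg hab fun s _ => decRearr_nonneg x s)

lemma continuousAt_integral_decRearr {y : ℝ} (hy : 0 < y) :
    ContinuousAt (fun t => ∫ s in (0 : ℝ)..t, decRearr x s) y := by
  rcases integral_decRearr_eq_zero_or_intervalIntegrable x with h | h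
  · exact continuousAt_const.congr
      (eventually_of_mem (Ioi_mem_nhds hy) fun t ht => (h t (le_of_lt ht)).symm)
  · have hint : IntegrableOn (decRearr x) (uIcc 0 (y + 1)) :=
      (intervalIntegrable_iff').1 (h (y + 1) (by linarith))
    refine (intervalIntegral.continuousOn_primitive_interval hint).continuousAt ?_
    rw [uIcc_of_le (by linarith)]
    exact Icc_mem_nhds hy (by linarith)

end DecreasingRearrangement

lemma intervalIntegrable_of_continuousOn_Ioi {g : ℝ → ℝ} {M : ℝ} (hg : ContinuousOn g (Ioi 0))
    (hM : ∀ t > 0, |g t| ≤ M) {μ : ℝ} (hμ : 0 ≤ μ) : IntervalIntegrable g volume 0 μ := by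
  rw [intervalIntegrable_iff_integrableOn_Ioc_of_le hμ]
  exact IntegrableOn.of_bound measure_Ioc_lt_top
    ((hg.mono Ioc_subset_Ioi_self).aestronglyMeasurable measurableSet_Ioc) M
    ((ae_restrict_iff' measurableSet_Ioc).2 (Eventually.of_forall fun t ht => hM t ht.1))

lemma isCb_comp_max_one {g : ℝ → ℝ} {M : ℝ} (hg : ContinuousOn g (Ioi 0))
    (hM : ∀ t > 0, |g t| ≤ M) : IsCb fun t => g (max t 1) :=
  have hmaps : MapsTo (max · 1) (Ici (0 : ℝ)) (Ioi 0) := fun t _ =>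
    one_pos.trans_le (le_max_right t 1)
  ⟨hg.comp (continuous_id.max continuous_const).continuousOn hmaps, M, fun _ ht => hM _ (hmaps ht)⟩

lemma tendsto_cesaro_of_eqOn_Ici {f g : ℝ → ℝ} {a A : ℝ} (ha : 0 ≤ a)
    (hf : ∀ μ, 0 ≤ μ → IntervalIntegrable f volume 0 μ)
    (hg : ∀ μ, 0 ≤ μ → IntervalIntegrable g volume 0 μ) (hfg : EqOn f g (Ici a))
    (h : Tendsto (cesaro f) atTop (𝓝 A)) : Tendsto (cesaro g) atTop (𝓝 A) := by
  set c := ∫ t in (0 : ℝ)..a, (g t - f t)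
  have hdiff : ∀ μ, a ≤ μ → ∫ t in (0 : ℝ)..μ, (g t - f t) = c := fun μ haμ => by
    have hμ := ha.trans haμ
    have hzero : ∫ t in a..μ, (g t - f t) = 0 := by
      refine (intervalIntegral.integral_congr (g := fun _ => (0 : ℝ)) fun t ht => ?_).trans
        intervalIntegral.integral_zero
      rw [uIcc_of_le haμ] at ht
      simp [hfg ht.1]
    rw [← intervalIntegral.integral_add_adjacent_intervals ((hg a ha).sub (hf a ha))
      (((hg a ha).sub (hf a ha)).symm.trans ((hg μ hμ).sub (hf μ hμ))), hzero, add_zero]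
  have hlim := h.add ((tendsto_const_nhds (x := c)).div_atTop tendsto_id)
  rw [add_zero] at hlim
  refine hlim.congr' ((eventually_ge_atTop (max a 1)).mono fun μ hμa => ?_)
  have hμ : 0 < μ := one_pos.trans_le ((le_max_right a 1).trans hμa)
  have hc := hdiff μ ((le_max_left a 1).trans hμa)
  rw [intervalIntegral.integral_sub (hg μ hμ.le) (hf μ hμ.le)] at hc
  rw [cesaro, cesaro, if_neg hμ.ne', if_neg hμ.ne', id, ← hc]
  ring

lemma div_sub_div_le_mul {p q r s M D : ℝ} (hp : 0 ≤ p) (hpq : p ≤ q) (hr : 0 < r) (hs : 0 < s)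
    (hM : p / r ≤ M) (hD : 1 - r / s ≤ D) (hD0 : 0 ≤ D) : p / r - q / s ≤ M * D :=
  calc p / r - q / s ≤ p / r - p / s := by gcongr
    _ = p / r * (1 - r / s) := by field_simp
    _ ≤ p / r * D := mul_le_mul_of_nonneg_left hD (div_nonneg hp hr.le)
    _ ≤ M * D := mul_le_mul_of_nonneg_right hM hD0

section Marcinkiewicz

variable {ψ κ x : ℝ → ℝ}

lemma phiW_nonneg (hψ : OmegaInf ψ) {t : ℝ} (ht : 0 ≤ t) : 0 ≤ phiW ψ x t :=
  div_nonneg (intervalIntegral.integral_nonneg ht fun s _ => decRearr_nonneg x s) (hψ.2.1 t ht)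

lemma MemMplus.exists_abs_phiW_le (hψ : OmegaInf ψ) (hx : MemMplus ψ x) :
    ∃ M, 0 ≤ M ∧ ∀ t > 0, |phiW ψ x t| ≤ M := by
  obtain ⟨M, hM⟩ := hx.1.2
  refine ⟨max M 0, le_max_right M 0, fun t ht => ?_⟩
  rw [abs_of_nonneg (phiW_nonneg hψ ht.le)]
  exact (hM t ht).trans (le_max_left M 0)

lemma continuousOn_phiW_comp (hψ : OmegaInf ψ) (hκ : MemK κ) (hD : DominatedGrowth ψ κ) :
    ContinuousOn (fun t => phiW ψ x (κ t)) (Ioi 0) := fun _ ht =>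
  (((continuousAt_integral_decRearr x (hκ.pos ht)).comp (hκ.continuousAt ht)).div
    (hD.1 _ ht).continuousAt (hψ.pos (hκ.pos ht)).ne').continuousWithinAt

lemma intervalIntegrable_phiW_comp (hψ : OmegaInf ψ) (hκ : MemK κ) (hD : DominatedGrowth ψ κ)
    (hx : MemMplus ψ x) {μ : ℝ} (hμ : 0 ≤ μ) :
    IntervalIntegrable (fun t => phiW ψ x (κ t)) volume 0 μ := by
  obtain ⟨M, -, hM⟩ := hx.exists_abs_phiW_le hψ
  exact intervalIntegrable_of_continuousOn_Ioi (continuousOn_phiW_comp hψ hκ hD)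
    (fun t ht => hM _ (hκ.pos ht)) hμ

lemma isCb_phiW_comp_max_one (hψ : OmegaInf ψ) (hκ : MemK κ) (hD : DominatedGrowth ψ κ)
    (hx : MemMplus ψ x) : IsCb fun t => phiW ψ x (κ (max t 1)) := by
  obtain ⟨M, -, hM⟩ := hx.exists_abs_phiW_le hψ
  exact isCb_comp_max_one (continuousOn_phiW_comp hψ hκ hD) fun t ht => hM _ (hκ.pos ht)

/-- Dominated growth bounds `1 - ψ (κ t) / ψ (κ u)` by `C (u - t) / t`. -/
lemma exists_phiW_comp_sub_le (hψ : OmegaInf ψ) (hκ : MemK κ) (hD : DominatedGrowth ψ κ)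
    (hx : MemMplus ψ x) :
    ∃ K, 0 ≤ K ∧ ∀ t u, 0 < t → t ≤ u → phiW ψ x (κ t) - phiW ψ x (κ u) ≤ K * (u - t) / t := by
  obtain ⟨M, hM0, hM⟩ := hx.exists_abs_phiW_le hψ
  obtain ⟨C, hC, hlog⟩ := hD.2
  refine ⟨M * C, mul_nonneg hM0 hC.le, fun t u ht htu => ?_⟩
  have hu := ht.trans_le htu
  have hratio := one_sub_div_le_of_logDeriv_le hC.le (fun s hs => hψ.pos (hκ.pos hs)) hD.1
    (fun s hs => (hlog s hs).le) ht htu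
  rw [mul_div_assoc] at hratio
  rw [mul_div_assoc, mul_assoc]
  exact div_sub_div_le_mul
    (intervalIntegral.integral_nonneg (hκ.pos ht).le fun s _ => decRearr_nonneg x s)
    (monotoneOn_integral_decRearr x (hκ.pos ht).le (hκ.pos hu).le
      ((hκ.1.le_iff_le ht.le hu.le).2 htu))
    (hψ.pos (hκ.pos ht)) (hψ.pos (hκ.pos hu)) ((le_abs_self _).trans (hM (κ t) (hκ.pos ht)))
    hratio (mul_nonneg hC.le (div_nonneg (by linarith) ht.le))

lemma tendsto_phiW_of_tendsto_cesaro (hψ : OmegaInf ψ) (hκ : MemK κ)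
    (hD : DominatedGrowth ψ κ) (hx : MemMplus ψ x) {A : ℝ}
    (h : Tendsto (cesaro fun t => phiW ψ x (κ t)) atTop (𝓝 A)) :
    Tendsto (phiW ψ x) atTop (𝓝 A) := by
  obtain ⟨K, hK, hslow⟩ := exists_phiW_comp_sub_le hψ hκ hD hx
  exact hκ.tendsto_comp_iff.1 <| tendsto_of_tendsto_cesaro hK
    (fun _ => intervalIntegrable_phiW_comp hψ hκ hD hx) hslow h

lemma fL_eq_of_tendsto_phiW (hψ : OmegaInf ψ) (hκ : MemK κ) (hD : DominatedGrowth ψ κ)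
    (hx : MemMplus ψ x) {A : ℝ} (h : Tendsto (phiW ψ x) atTop (𝓝 A)) (L : BanachLimitR) :
    fL L ψ κ x = A :=
  L.apply_eq_of_tendsto (isCb_phiW_comp_max_one hψ hκ hD hx) <|
    (hκ.tendsto_comp_iff.2 h).comp <| tendsto_atTop_mono (le_max_left · 1) tendsto_id

lemma exists_tendsto_cesaro_of_fL_eq (hψ : OmegaInf ψ) (hκ : MemK κ)
    (hD : DominatedGrowth ψ κ) (hx : MemMplus ψ x)
    (h : ∀ L₁ L₂ : BanachLimitR, fL L₁ ψ κ x = fL L₂ ψ κ x) :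
    ∃ A, Tendsto (cesaro fun t => phiW ψ x (κ t)) atTop (𝓝 A) := by
  have hG := isCb_phiW_comp_max_one hψ hκ hD hx
  exact ⟨_, tendsto_cesaro_of_eqOn_Ici zero_le_one (fun _ => hG.intervalIntegrable)
    (fun _ => intervalIntegrable_phiW_comp hψ hκ hD hx)
    (fun t (ht : 1 ≤ t) => by simp [max_eq_left ht])
    (hG.tendsto_cesaro_of_forall_banachLimitR_eq h)⟩

end Marcinkiewicz

/-- for `κ ∈ D(ψ)` and `x ∈ M₊(ψ)`: Cesàro convergence of
`φ_κ(x)`, independence of `f_{L,κ}(x)` of the Banach limit `L`, and existence of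
`lim φ(x)` (with all `f_{L,κ}(x)` equal to that limit) are equivalent;
in particular `x` is `κ`-measurable iff it is Tauberian. -/
theorem kappa_measurable_iff_tauberian (ψ κ x : ℝ → ℝ) (hψ : OmegaInf ψ)
    (hκ : MemK κ) (hD : DominatedGrowth ψ κ) (hx : MemMplus ψ x) :
    ((∃ A : ℝ, Tendsto (cesaro fun t => phiW ψ x (κ t)) atTop (nhds A)) ↔
      ∀ L₁ L₂ : BanachLimitR, fL L₁ ψ κ x = fL L₂ ψ κ x) ∧
    ((∀ L₁ L₂ : BanachLimitR, fL L₁ ψ κ x = fL L₂ ψ κ x) ↔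
      ∃ A : ℝ, Tendsto (phiW ψ x) atTop (nhds A) ∧ ∀ L : BanachLimitR, fL L ψ κ x = A) ∧
    ((∀ L₁ L₂ : BanachLimitR, fL L₁ ψ κ x = fL L₂ ψ κ x) ↔
      ∃ A : ℝ, Tendsto (phiW ψ x) atTop (nhds A)) := by
  have cesaro_to_lim : (∃ A, Tendsto (cesaro fun t => phiW ψ x (κ t)) atTop (𝓝 A)) →
      ∃ A, Tendsto (phiW ψ x) atTop (𝓝 A) := fun ⟨A, hA⟩ =>
    ⟨A, tendsto_phiW_of_tendsto_cesaro hψ hκ hD hx hA⟩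
  have lim_to_eq : (∃ A, Tendsto (phiW ψ x) atTop (𝓝 A)) →
      ∀ L₁ L₂ : BanachLimitR, fL L₁ ψ κ x = fL L₂ ψ κ x := fun ⟨_, hA⟩ L₁ L₂ =>
    (fL_eq_of_tendsto_phiW hψ hκ hD hx hA L₁).trans (fL_eq_of_tendsto_phiW hψ hκ hD hx hA L₂).symm
  have eq_to_cesaro := exists_tendsto_cesaro_of_fL_eq hψ hκ hD hx
  refine ⟨⟨fun h => lim_to_eq (cesaro_to_lim h), eq_to_cesaro⟩,
    ⟨fun h => ?_, fun ⟨A, hA, _⟩ => lim_to_eq ⟨A, hA⟩⟩,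
    ⟨fun h => cesaro_to_lim (eq_to_cesaro h), lim_to_eq⟩⟩
  obtain ⟨A, hA⟩ := cesaro_to_lim (eq_to_cesaro h)
  exact ⟨A, hA, fL_eq_of_tendsto_phiW hψ hκ hD hx hA⟩
end
end

section
/- Let ψ ∈ Ω∞. Then lim_{t→∞} ψ(2t)/ψ(t) = 1 if and only if there exists κ ∈ 𝒦 of exponential increase such that lim_{n→∞} ψ(κ(n))/ψ(κ(n+1)) = 1. -/
/-!
A concave `ψ` tending to `∞` is nondecreasing, so for `0 ≤ s ≤ t ≤ 2ᵏ s` the ratio `ψ(s)/ψ(t)` lies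
between `ψ(s)/ψ(2ᵏ s)` and `1`, and `ψ(s)/ψ(2ᵏ s) → 1` by telescoping the doubling limit. The
function `κ(t) = eᵗ - 1` has exponential increase and `κ(n) ≤ κ(n+1) ≤ 4κ(n)` for `n ≥ 1`.
Conversely, if `2κ(t) < κ(t + C)` and `K = ⌈C⌉ + 1`, every `t ∈ [κ(n), κ(n+1))` has
`2t ≤ κ(n+K)`, so `ψ(t)/ψ(2t) ≥ ψ(κ(n))/ψ(κ(n+K))`, a product of `K` consecutive ratios tending
to `1`.
-/

open MeasureTheory Filter Set

noncomputable section

open Topology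

lemma ConcaveOn.monotoneOn_of_tendsto_atTop {f : ℝ → ℝ} {a : ℝ} (hf : ConcaveOn ℝ (Ici a) f)
    (htop : Tendsto f atTop atTop) : MonotoneOn f (Ici a) := by
  intro x hx y hy hxy
  rcases hxy.eq_or_lt with rfl | hxy
  · rfl
  by_contra! hyx
  -- a concave function that drops on `[x, y]` keeps dropping beyond `y`, against `f → ∞`
  obtain ⟨z, hfz, hyz⟩ := ((htop.eventually_ge_atTop (f y)).and (eventually_gt_atTop y)).exists
  have hslope := hf.slope_anti_adjacent hx (mem_Ici.2 (hy.out.trans hyz.le)) hxy hyz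
  have : 0 ≤ (f z - f y) / (z - y) := div_nonneg (by linarith) (by linarith)
  have : (f y - f x) / (y - x) < 0 := div_neg_of_neg_of_pos (by linarith) (by linarith)
  linarith

lemma tendsto_div_symm_nhds_one {α : Type*} {l : Filter α} {f g : α → ℝ}
    (h : Tendsto (fun x => f x / g x) l (𝓝 1)) : Tendsto (fun x => g x / f x) l (𝓝 1) := by
  simpa [inv_div] using h.inv₀ one_ne_zero

lemma tendsto_div_iterate_of_tendsto_div {α : Type*} {l : Filter α} {f : α → ℝ} {g : α → α}
    (hg : Tendsto g l l) (hf : ∀ᶠ x in l, f x ≠ 0) (h : Tendsto (fun x => f x / f (g x)) l (𝓝 1))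
    (k : ℕ) : Tendsto (fun x => f x / f (g^[k] x)) l (𝓝 1) := by
  induction k with
  | zero => exact tendsto_const_nhds.congr' (hf.mono fun x hx => (div_self hx).symm)
  | succ k ih =>
    have hmul := h.mul (ih.comp hg)
    rw [one_mul] at hmul
    refine hmul.congr' ?_
    filter_upwards [hg.eventually hf] with x hx
    rw [Function.comp_apply, Function.iterate_succ_apply, div_mul_div_cancel₀ hx]

lemma exists_le_and_lt_succ_of_tendsto_atTop {u : ℕ → ℝ} (hu : Tendsto u atTop atTop) {t : ℝ} (ht : u 0 ≤ t) :
    ∃ n, u n ≤ t ∧ t < u (n + 1) := by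
  classical
  have hex : ∃ m, t < u (m + 1) :=
    ((hu.comp (tendsto_add_atTop_nat 1)).eventually_gt_atTop t).exists
  refine ⟨Nat.find hex, ?_, Nat.find_spec hex⟩
  rcases hn : Nat.find hex with _ | m
  · exact ht
  · exact not_lt.1 (Nat.find_min hex (hn ▸ Nat.lt_succ_self m))

lemma tendsto_of_le_of_forall_le_of_mem_Ico {u a : ℕ → ℝ} {g : ℝ → ℝ} {l : ℝ} (hu : Monotone u)
    (hu_top : Tendsto u atTop atTop) (ha : Tendsto a atTop (𝓝 l)) (hg : ∀ᶠ t in atTop, g t ≤ l)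
    (hag : ∀ᶠ t in atTop, ∀ n, u n ≤ t → t < u (n + 1) → a n ≤ g t) :
    Tendsto g atTop (𝓝 l) := by
  rw [tendsto_order]
  refine ⟨fun b hb => ?_, fun b hb => hg.mono fun t ht => ht.trans_lt hb⟩
  obtain ⟨N, hN⟩ := eventually_atTop.1 (ha.eventually (eventually_gt_nhds hb))
  filter_upwards [hag, eventually_ge_atTop (u N)] with t hag htN
  obtain ⟨n, hnt, htn⟩ := exists_le_and_lt_succ_of_tendsto_atTop hu_top ((hu N.zero_le).trans htN)
  have hNn : N ≤ n := by
    by_contra! hnN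
    exact (htN.trans_lt htn).not_ge (hu hnN)
  exact (hN n hNn).trans_le (hag n hnt htn)

lemma tendsto_div_of_le_two_pow_mul {ψ : ℝ → ℝ} (hψ_mono : MonotoneOn ψ (Ici 0))
    (hψ_pos : ∀ᶠ t in atTop, 0 < ψ t) (h : Tendsto (fun t => ψ t / ψ (2 * t)) atTop (𝓝 1))
    {u v : ℕ → ℝ} (hu : Tendsto u atTop atTop) {k : ℕ}
    (huv : ∀ᶠ n in atTop, 0 ≤ u n ∧ u n ≤ v n ∧ v n ≤ 2 ^ k * u n) :
    Tendsto (fun n => ψ (u n) / ψ (v n)) atTop (𝓝 1) := by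
  have hpow := tendsto_div_iterate_of_tendsto_div (g := (2 * ·))
    (tendsto_id.const_mul_atTop two_pos) (hψ_pos.mono fun t ht => ht.ne') h k
  simp only [mul_left_iterate_apply] at hpow
  have mono {x y : ℝ} (hx : 0 ≤ x) (hxy : x ≤ y) : ψ x ≤ ψ y := hψ_mono hx (hx.trans hxy) hxy
  refine tendsto_of_tendsto_of_tendsto_of_le_of_le' (hpow.comp hu) tendsto_const_nhds ?_ ?_
  all_goals filter_upwards [huv, hu.eventually hψ_pos] with n ⟨hu0, huv, hvu⟩ hψu
  · exact div_le_div_of_nonneg_left hψu.le (hψu.trans_le (mono hu0 huv))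
      (mono (hu0.trans huv) hvu)
  · exact div_le_one_of_le₀ (mono hu0 huv) (hψu.le.trans (mono hu0 huv))

lemma tendsto_div_two_mul_of_expIncrease {ψ κ : ℝ → ℝ} (hψ_mono : MonotoneOn ψ (Ici 0))
    (hψ_pos : ∀ᶠ t in atTop, 0 < ψ t) (hκ_mono : MonotoneOn κ (Ici 0))
    (hκ_nonneg : MapsTo κ (Ici 0) (Ici 0)) (hκ_top : Tendsto κ atTop atTop)
    (hκ_exp : ExpIncrease κ)
    (h : Tendsto (fun n : ℕ => ψ (κ n) / ψ (κ (n + 1 : ℕ))) atTop (𝓝 1)) :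
    Tendsto (fun t => ψ t / ψ (2 * t)) atTop (𝓝 1) := by
  obtain ⟨C, hC, hκC⟩ := hκ_exp
  have mono {x y : ℝ} (hx : 0 ≤ x) (hxy : x ≤ y) : ψ x ≤ ψ y := hψ_mono hx (hx.trans hxy) hxy
  set u : ℕ → ℝ := fun n => κ n
  have hu_mono : Monotone u := fun m n hmn =>
    hκ_mono (mem_Ici.2 m.cast_nonneg) (mem_Ici.2 n.cast_nonneg) (Nat.cast_le.2 hmn)
  have hu_nonneg (n : ℕ) : 0 ≤ u n := hκ_nonneg (mem_Ici.2 n.cast_nonneg)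
  have hu_top : Tendsto u atTop atTop := hκ_top.comp tendsto_natCast_atTop_atTop
  set K := ⌈C⌉₊ + 1
  have hdouble (n : ℕ) : 2 * u (n + 1) ≤ u (n + K) := by
    refine (hκC _ (by positivity)).le.trans
      (hκ_mono (mem_Ici.2 (by positivity)) (mem_Ici.2 (by positivity)) ?_)
    push_cast [K]
    linarith [Nat.le_ceil C]
  have hK := tendsto_div_iterate_of_tendsto_div (tendsto_add_atTop_nat 1)
    ((hu_top.eventually hψ_pos).mono fun n hn => hn.ne') h K
  simp only [add_right_iterate_apply, smul_eq_mul, mul_one] at hK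
  refine tendsto_of_le_of_forall_le_of_mem_Ico hu_mono hu_top hK ?_ ?_
  all_goals filter_upwards [hψ_pos, eventually_ge_atTop 0] with t hψt ht
  · exact div_le_one_of_le₀ (mono ht (by linarith)) (hψt.le.trans (mono ht (by linarith)))
  · intro n hnt htn
    exact div_le_div₀ hψt.le (mono (hu_nonneg n) hnt) (hψt.trans_le (mono ht (by linarith)))
      (mono (by linarith) (by linarith [hdouble n]))

section ExpSubOne

open Real

lemma memK_exp_sub_one : MemK (fun t => exp t - 1) := by
  refine ⟨fun x _ y _ hxy => by simpa using hxy, by simp, fun x hx => ?_, fun y hy => ?_,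
    (differentiable_exp.sub_const 1).differentiableOn, tendsto_atTop_add_const_right _ _
      tendsto_exp_atTop⟩
  · simpa using one_le_exp hx.out
  · refine ⟨log (y + 1), log_nonneg (by linarith [hy.out]), ?_⟩
    simp [exp_log (by linarith [hy.out] : 0 < y + 1)]

lemma expIncrease_exp_sub_one : ExpIncrease (fun t => exp t - 1) := by
  refine ⟨1, one_pos, fun t _ => ?_⟩
  show 2 * (exp t - 1) < exp (t + 1) - 1
  rw [exp_add]
  nlinarith [exp_pos t, exp_one_gt_d9]

lemma exp_add_one_sub_one_le {x : ℝ} (hx : 1 ≤ x) : exp (x + 1) - 1 ≤ 2 ^ 2 * (exp x - 1) := by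
  have hex : exp 1 ≤ exp x := exp_le_exp.2 hx
  rw [exp_add]
  nlinarith [exp_one_gt_d9, exp_one_lt_d9]

end ExpSubOne

/-- `ψ(2t)/ψ(t) → 1` iff there is `κ ∈ 𝒦` of exponential
increase with `ψ(κ(n))/ψ(κ(n+1)) → 1`. -/
theorem psi_doubling_iff_exists_exp_kappa (ψ : ℝ → ℝ) (hψ : OmegaInf ψ) :
    Tendsto (fun t : ℝ => ψ (2 * t) / ψ t) atTop (nhds 1) ↔
      ∃ κ : ℝ → ℝ, MemK κ ∧ ExpIncrease κ ∧
        Tendsto (fun n : ℕ => ψ (κ (n:ℝ)) / ψ (κ ((n:ℝ) + 1))) atTop (nhds 1) := by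
  obtain ⟨hψ_conc, -, -, hψ_top⟩ := hψ
  have hψ_mono := hψ_conc.monotoneOn_of_tendsto_atTop hψ_top
  have hψ_pos := hψ_top.eventually_gt_atTop 0
  constructor
  · intro h
    refine ⟨fun t => Real.exp t - 1, memK_exp_sub_one, expIncrease_exp_sub_one, ?_⟩
    obtain ⟨-, -, hκ_maps, -, -, hκ_top⟩ := memK_exp_sub_one
    refine tendsto_div_of_le_two_pow_mul hψ_mono hψ_pos (tendsto_div_symm_nhds_one h) (k := 2)
      (hκ_top.comp tendsto_natCast_atTop_atTop) ?_
    filter_upwards [eventually_ge_atTop 1] with n hn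
    have hn : (1 : ℝ) ≤ n := by exact_mod_cast hn
    refine ⟨hκ_maps (mem_Ici.2 n.cast_nonneg), ?_, exp_add_one_sub_one_le hn⟩
    gcongr
    linarith
  · rintro ⟨κ, ⟨hκ_mono, -, hκ_maps, -, -, hκ_top⟩, hκ_exp, h⟩
    refine tendsto_div_symm_nhds_one (tendsto_div_two_mul_of_expIncrease hψ_mono hψ_pos
      hκ_mono.monotoneOn hκ_maps hκ_top hκ_exp ?_)
    simpa only [Nat.cast_succ] using h
end
end
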